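/- Let T be an NBC spanning tree of G, let e ∈ IN(T), and let f := min cut(T,e) (so f < e and f ∉ E(T)). Then the spanning tree with edge set (E(T) \ {e}) ∪ {f} is an NBC spanning tree of G, and it is lexicographically smaller than T. -/

import Mathlib

open SimpleGraph

attribute [-instance] Sym2.instPartialOrder

variable {V : Type*}

/-- `T` is a spanning tree of `G`: a subgraph of `G` (on the same vertex set) that is a tree. -/
def IsSpanningTree (G T : SimpleGraph V) : Prop :=
  T ≤ G ∧ T.IsTree

/-- `cutset G T e`: the set of edges of `G` whose endpoints lie in the two different
components of `T` with the edge `e` deleted. -/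
def cutset (G T : SimpleGraph V) (e : Sym2 V) : Set (Sym2 V) :=
  {f | f ∈ G.edgeSet ∧ ∀ u v : V, f = s(u, v) → ¬ (T.deleteEdges {e}).Reachable u v}

/-- `cycset T f`: the edge set of the unique cycle of `T` with the edge `f` added
(an edge of the unicyclic connected graph `T + f` lies on the cycle iff deleting it
keeps the graph connected). -/
def cycset (T : SimpleGraph V) (f : Sym2 V) : Set (Sym2 V) :=
  {e | e ∈ (T ⊔ fromEdgeSet {f}).edgeSet ∧
    ((T ⊔ fromEdgeSet {f}).deleteEdges {e}).Connected}

/-- An edge `e` of `T` is internally active if it is the minimum of `cutset G T e`. -/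
def InternallyActive [LinearOrder (Sym2 V)] (G T : SimpleGraph V) (e : Sym2 V) : Prop :=
  e ∈ T.edgeSet ∧ ∀ f ∈ cutset G T e, e ≤ f

/-- `IN G T`: the set of internally inactive edges of `T`. -/
def IN [LinearOrder (Sym2 V)] (G T : SimpleGraph V) : Set (Sym2 V) :=
  {e | e ∈ T.edgeSet ∧ ¬ InternallyActive G T e}

/-- `C` is the edge set of some cycle of `G`. -/
def IsCycleEdgeSet (G : SimpleGraph V) (C : Set (Sym2 V)) : Prop :=
  ∃ (v : V) (w : G.Walk v v), w.IsCycle ∧ C = {e | e ∈ w.edges}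

/-- A broken circuit: the edge set of a cycle with its minimum edge removed. -/
def IsBrokenCircuit [LinearOrder (Sym2 V)] (G : SimpleGraph V) (B : Set (Sym2 V)) : Prop :=
  ∃ (C : Set (Sym2 V)) (e : Sym2 V),
    IsCycleEdgeSet G C ∧ e ∈ C ∧ (∀ f ∈ C, e ≤ f) ∧ B = C \ {e}

/-- A set of edges is NBC if it contains no broken circuit. -/
def IsNBC [LinearOrder (Sym2 V)] (G : SimpleGraph V) (S : Set (Sym2 V)) : Prop :=
  ∀ B : Set (Sym2 V), IsBrokenCircuit G B → ¬ B ⊆ S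

/-- `T` is an NBC spanning tree of `G`. -/
def IsNBCSpanningTree [LinearOrder (Sym2 V)] (G T : SimpleGraph V) : Prop :=
  IsSpanningTree G T ∧ IsNBC G T.edgeSet

/-- The edge set of `T` written as a list in increasing order. -/
noncomputable def edgeList [Fintype V] [LinearOrder (Sym2 V)] (T : SimpleGraph V) :
    List (Sym2 V) :=
  (Set.toFinite T.edgeSet).toFinset.sort (· ≤ ·)

/-- Lexicographic order on spanning trees via their sorted edge lists. -/
def treeLexLT [Fintype V] [LinearOrder (Sym2 V)] (T T' : SimpleGraph V) : Prop :=
  List.Lex (· < ·) (edgeList T) (edgeList T')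

section AuxLemmas

variable {V : Type*}

private lemma sym2_exists (z : Sym2 V) : ∃ x y : V, z = s(x, y) :=
  z.inductionOn fun x y => ⟨x, y, rfl⟩

private lemma reach_ends {T : SimpleGraph V} {u0 v0 : V} :
    ∀ {w z : V}, T.Walk w z →
      (T.deleteEdges {s(u0, v0)}).Reachable w z ∨
      ((T.deleteEdges {s(u0, v0)}).Reachable w u0 ∧
        (T.deleteEdges {s(u0, v0)}).Reachable z v0) ∨
      ((T.deleteEdges {s(u0, v0)}).Reachable w v0 ∧
        (T.deleteEdges {s(u0, v0)}).Reachable z u0) := by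
  intro w z p
  induction p with
  | nil => exact Or.inl (Reachable.refl _)
  | @cons w x z h p ih =>
    by_cases hwx : s(w, x) = s(u0, v0)
    · rcases Sym2.eq_iff.mp hwx with ⟨hw, hx⟩ | ⟨hw, hx⟩
      · subst hw; subst hx
        rcases ih with h1 | ⟨h1, h2⟩ | ⟨h1, h2⟩
        · exact Or.inr (Or.inl ⟨Reachable.refl _, h1.symm⟩)
        · exact Or.inl (h1.symm.trans h2.symm)
        · exact Or.inl h2.symm
      · subst hw; subst hx
        rcases ih with h1 | ⟨h1, h2⟩ | ⟨h1, h2⟩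
        · exact Or.inr (Or.inr ⟨Reachable.refl _, h1.symm⟩)
        · exact Or.inl h2.symm
        · exact Or.inl (h1.symm.trans h2.symm)
    · have hadj : (T.deleteEdges {s(u0, v0)}).Adj w x := by
        rw [SimpleGraph.deleteEdges_adj]
        exact ⟨h, by simpa using hwx⟩
      rcases ih with h1 | ⟨h1, h2⟩ | ⟨h1, h2⟩
      · exact Or.inl (hadj.reachable.trans h1)
      · exact Or.inr (Or.inl ⟨hadj.reachable.trans h1, h2⟩)
      · exact Or.inr (Or.inr ⟨hadj.reachable.trans h1, h2⟩)

private lemma reach_elim {K L : SimpleGraph V} {x y : V}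
    (hadj : ∀ u v : V, L.Adj u v → K.Adj u v ∨ s(u, v) = s(x, y))
    (hxy : K.Reachable x y) :
    ∀ {a b : V}, L.Reachable a b → K.Reachable a b := by
  intro a b h
  obtain ⟨p⟩ := h
  induction p with
  | nil => exact Reachable.refl _
  | @cons a c b h p ih =>
    have step : K.Reachable a c := by
      rcases hadj _ _ h with h' | h'
      · exact h'.reachable
      · rcases Sym2.eq_iff.mp h' with ⟨ha, hc⟩ | ⟨ha, hc⟩
        · rw [ha, hc]; exact hxy
        · rw [ha, hc]; exact hxy.symm
    exact step.trans ih

private lemma sorted_lex {α : Type*} [LinearOrder α] (L : List α) :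
    ∀ L' : List α, L.Pairwise (· < ·) → L'.Pairwise (· < ·) →
    ∀ f : α, f ∈ L' → f ∉ L →
    (∀ x ∈ L, x < f → x ∈ L') → (∀ x ∈ L', x < f → x ∈ L) →
    (∃ y ∈ L, f < y) → List.Lex (· < ·) L' L := by
  induction L with
  | nil =>
    rintro _ _ _ f _ _ _ _ ⟨y, hy, _⟩
    exact absurd hy List.not_mem_nil
  | cons a t ih =>
    intro L' hL hL' f hfL' hfL hlow hlow' hex
    obtain ⟨hat, ht⟩ := List.pairwise_cons.mp hL
    cases L' with
    | nil => exact absurd hfL' List.not_mem_nil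
    | cons a' t' =>
      obtain ⟨ha't', ht'⟩ := List.pairwise_cons.mp hL'
      rcases lt_trichotomy a f with haf | heq | haf
      · -- a < f : heads must agree
        have haL' : a ∈ a' :: t' := hlow a List.mem_cons_self haf
        have haa' : a' = a := by
          rcases List.mem_cons.mp haL' with heq | hmem
          · exact heq.symm
          · have h1 : a' < a := ha't' a hmem
            have h2 : a' ∈ a :: t := hlow' a' List.mem_cons_self (h1.trans haf)
            rcases List.mem_cons.mp h2 with heq' | hmem'
            · exact absurd (heq' ▸ h1) (lt_irrefl a)
            · exact absurd (hat a' hmem') (asymm h1)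
        rw [haa']
        apply List.Lex.cons
        refine ih t' ht ht' f ?_ ?_ ?_ ?_ ?_
        · rcases List.mem_cons.mp hfL' with heq | hmem
          · exfalso; rw [heq, haa'] at haf; exact lt_irrefl a haf
          · exact hmem
        · exact fun hmem => hfL (List.mem_cons_of_mem a hmem)
        · intro x hx hxf
          rcases List.mem_cons.mp (hlow x (List.mem_cons_of_mem a hx) hxf) with heq | hmem
          · exfalso
            have h1 := hat x hx
            rw [heq, haa'] at h1
            exact lt_irrefl a h1
          · exact hmem
        · intro x hx hxf
          rcases List.mem_cons.mp (hlow' x (List.mem_cons_of_mem a' hx) hxf) with heq | hmem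
          · exfalso
            have h1 := ha't' x hx
            rw [heq] at h1
            rw [haa'] at h1
            exact lt_irrefl a h1
          · exact hmem
        · obtain ⟨y, hy, hfy⟩ := hex
          rcases List.mem_cons.mp hy with heq | hmem
          · exact absurd (heq ▸ (haf.trans hfy)) (lt_irrefl a)
          · exact ⟨y, hmem, hfy⟩
      · exact absurd (List.mem_cons.mpr (Or.inl heq.symm)) hfL
      · -- f < a : head of L' is f
        have ha'f : a' = f := by
          rcases List.mem_cons.mp hfL' with heq | hmem
          · exact heq.symm
          · have h1 : a' < f := ha't' f hmem
            have h2 : a' ∈ a :: t := hlow' a' List.mem_cons_self h1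
            rcases List.mem_cons.mp h2 with heq' | hmem'
            · exfalso; rw [heq'] at h1; exact lt_irrefl a (h1.trans haf)
            · exact absurd ((hat a' hmem').trans (h1.trans haf)) (lt_irrefl a)
        rw [ha'f]
        exact List.Lex.rel haf

end AuxLemmas

/-- if `T` is an NBC spanning tree, `e ∈ IN(T)` and `f := min cut(T,e)`
(so `f < e` and `f ∉ E(T)`), then the spanning tree with edge set `(E(T) \ {e}) ∪ {f}` is
an NBC spanning tree of `G` which is lexicographically smaller than `T`. -/
theorem exchange_min_cut_lex_smaller
    {V : Type*} [Fintype V] [LinearOrder (Sym2 V)] (G : SimpleGraph V)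
    (hconn : G.Connected)
    (T : SimpleGraph V) (hT : IsNBCSpanningTree G T)
    (e : Sym2 V) (he : e ∈ IN G T)
    (f : Sym2 V) (hf : f ∈ cutset G T e) (hfmin : ∀ g ∈ cutset G T e, f ≤ g) :
    f < e ∧ f ∉ T.edgeSet ∧
    ∀ T' : SimpleGraph V, T'.edgeSet = (T.edgeSet \ {e}) ∪ {f} →
      IsNBCSpanningTree G T' ∧ treeLexLT T' T := by
  classical
  obtain ⟨⟨hTG, hTconn, hTacyc⟩, hTnbc⟩ := hT
  obtain ⟨heT, heNA⟩ := he
  obtain ⟨hfG, hfcut⟩ := hf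
  obtain ⟨u0, v0, heuv⟩ := sym2_exists e
  obtain ⟨a, b, hfab⟩ := sym2_exists f
  -- e belongs to its own cutset
  have ecut : e ∈ cutset G T e := by
    refine ⟨SimpleGraph.edgeSet_subset_edgeSet.mpr hTG heT, ?_⟩
    rintro u v rfl hreach
    have hadj : T.Adj u v := (SimpleGraph.mem_edgeSet T).mp heT
    obtain ⟨u', p, hp, -⟩ :=
      SimpleGraph.adj_and_reachable_delete_edges_iff_exists_cycle.mp ⟨hadj, hreach⟩
    exact hTacyc p hp
  -- f < e
  have hfe : f < e := by
    have h2 : ¬ ∀ g ∈ cutset G T e, e ≤ g := fun h => heNA ⟨heT, h⟩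
    push_neg at h2
    obtain ⟨g, hg, hge⟩ := h2
    exact lt_of_le_of_lt (hfmin g hg) hge
  -- f ∉ E(T)
  have hfnr : ¬ (T.deleteEdges {e}).Reachable a b := hfcut a b hfab
  have hfT : f ∉ T.edgeSet := by
    intro hmem
    apply hfnr
    have hadj : (T.deleteEdges {e}).Adj a b := by
      rw [SimpleGraph.deleteEdges_adj]
      refine ⟨(SimpleGraph.mem_edgeSet T).mp (hfab ▸ hmem), ?_⟩
      simp only [Set.mem_singleton_iff]
      rw [← hfab]
      exact hfe.ne
    exact hadj.reachable
  refine ⟨hfe, hfT, ?_⟩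
  intro T' hT'
  have hT'mem : ∀ x : Sym2 V, x ∈ T'.edgeSet ↔ x ∈ (T.edgeSet \ {e}) ∪ {f} := fun x => by
    rw [hT']
  have hfT' : f ∈ T'.edgeSet := (hT'mem f).mpr (Or.inr rfl)
  have hT'adj_ab : T'.Adj a b := (SimpleGraph.mem_edgeSet T').mp (hfab ▸ hfT')
  have hDle : T.deleteEdges {e} ≤ T' := by
    apply SimpleGraph.edgeSet_subset_edgeSet.mp
    intro x hx
    rw [SimpleGraph.edgeSet_deleteEdges] at hx
    exact (hT'mem x).mpr (Or.inl hx)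
  have hT'G : T' ≤ G := by
    apply SimpleGraph.edgeSet_subset_edgeSet.mp
    intro x hx
    rcases (hT'mem x).mp hx with h | h
    · exact SimpleGraph.edgeSet_subset_edgeSet.mpr hTG h.1
    · rw [Set.mem_singleton_iff] at h
      rw [h]
      exact hfG
  -- sides of the cut
  have hside : ∀ (x y : V), e = s(x, y) → ∀ w : V,
      (T.deleteEdges {e}).Reachable w x ∨ (T.deleteEdges {e}).Reachable w y := by
    intro x y hexy w
    obtain ⟨p⟩ := hTconn.preconnected w x
    rw [hexy]
    rcases reach_ends (u0 := x) (v0 := y) p with h | ⟨h1, h2⟩ | ⟨h1, h2⟩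
    · exact Or.inl h
    · exact Or.inl h1
    · exact Or.inr h1
  have hab_sides : ∃ x y : V, e = s(x, y) ∧
      (T.deleteEdges {e}).Reachable a x ∧ (T.deleteEdges {e}).Reachable b y := by
    rcases hside u0 v0 heuv a with h1 | h1 <;> rcases hside u0 v0 heuv b with h2 | h2
    · exact absurd (h1.trans h2.symm) hfnr
    · exact ⟨u0, v0, heuv, h1, h2⟩
    · exact ⟨v0, u0, heuv.trans Sym2.eq_swap, h1, h2⟩
    · exact absurd (h1.trans h2.symm) hfnr
  obtain ⟨x0, y0, hexy, hax, hby⟩ := hab_sides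
  -- T' is connected
  have hx0y0 : T'.Reachable x0 y0 :=
    ((hax.mono hDle).symm.trans hT'adj_ab.reachable).trans (hby.mono hDle)
  have hkey : ∀ w : V, T'.Reachable w x0 := by
    intro w
    rcases hside x0 y0 hexy w with h | h
    · exact h.mono hDle
    · exact (h.mono hDle).trans hx0y0.symm
  have hT'conn : T'.Connected :=
    (connected_iff_exists_forall_reachable T').mpr ⟨x0, fun w => (hkey w).symm⟩
  -- T' is acyclic
  have hT'acyc : T'.IsAcyclic := by
    intro v c hc
    by_cases hfc : f ∈ c.edges
    · have h2 := (SimpleGraph.adj_and_reachable_delete_edges_iff_exists_cycle (G := T')).mpr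
        ⟨v, c, hc, by rw [← hfab]; exact hfc⟩
      apply hfnr
      have hle : T'.deleteEdges {s(a, b)} ≤ T.deleteEdges {e} := by
        apply SimpleGraph.edgeSet_subset_edgeSet.mp
        intro z hz
        rw [SimpleGraph.edgeSet_deleteEdges] at hz ⊢
        obtain ⟨hz1, hz2⟩ := hz
        rcases (hT'mem z).mp hz1 with h | h
        · exact h
        · exfalso
          apply hz2
          rw [Set.mem_singleton_iff] at h ⊢
          rw [h]
          exact hfab
      exact Reachable.mono hle h2.2
    · have hsub : ∀ z ∈ c.edges, z ∈ T.edgeSet := by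
        intro z hz
        rcases (hT'mem z).mp (c.edges_subset_edgeSet hz) with h | h
        · exact h.1
        · rw [Set.mem_singleton_iff] at h
          exact absurd (h ▸ hz) hfc
      exact hTacyc (c.transfer T hsub) (hc.transfer hsub)
  have hT'tree : T'.IsTree := ⟨hT'conn, hT'acyc⟩
  -- T' is NBC
  have hT'nbc : IsNBC G T'.edgeSet := by
    rintro B ⟨C, g, hCcyc, hgC, hgmin, rfl⟩ hBsub
    obtain ⟨v, w, hw, hCeq⟩ := hCcyc
    by_cases hfB : f ∈ C \ ({g} : Set (Sym2 V))
    · obtain ⟨hfC, hfg⟩ := hfB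
      have hgG : g ∈ G.edgeSet := w.edges_subset_edgeSet (by
        have hh := hgC
        rw [hCeq] at hh
        exact hh)
      have hgcut : g ∈ cutset G T e := by
        refine ⟨hgG, ?_⟩
        intro x' y' hgx'y' hreach
        have hHsub : ∀ z ∈ w.edges, z ∈ (T' ⊔ SimpleGraph.fromEdgeSet {g}).edgeSet := by
          intro z hz
          have hzC : z ∈ C := by rw [hCeq]; exact hz
          rw [SimpleGraph.edgeSet_sup]
          by_cases hzg : z = g
          · right
            rw [SimpleGraph.edgeSet_fromEdgeSet]
            refine ⟨by simp [hzg], ?_⟩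
            rw [hzg]
            exact G.not_isDiag_of_mem_edgeSet hgG
          · left
            exact hBsub ⟨hzC, hzg⟩
        have hfw : s(a, b) ∈ (w.transfer _ hHsub).edges := by
          rw [SimpleGraph.Walk.edges_transfer, ← hfab]
          rw [hCeq] at hfC
          exact hfC
        have h2 := (SimpleGraph.adj_and_reachable_delete_edges_iff_exists_cycle
            (G := T' ⊔ SimpleGraph.fromEdgeSet {g})).mpr
          ⟨v, w.transfer _ hHsub, hw.transfer hHsub, hfw⟩
        apply hfnr
        refine reach_elim (x := x') (y := y') ?_ hreach h2.2
        intro u v' huv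
        have huv' : ((T' ⊔ SimpleGraph.fromEdgeSet {g}).deleteEdges {s(a, b)}).Adj u v' := huv
        rw [SimpleGraph.deleteEdges_adj, SimpleGraph.sup_adj] at huv'
        obtain ⟨h1, h2'⟩ := huv'
        rcases h1 with h1 | h1
        · rcases (hT'mem s(u, v')).mp ((SimpleGraph.mem_edgeSet T').mpr h1) with h3 | h3
          · left
            rw [SimpleGraph.deleteEdges_adj]
            exact ⟨(SimpleGraph.mem_edgeSet T).mp h3.1, by simpa using h3.2⟩
          · exfalso
            apply h2'
            rw [Set.mem_singleton_iff] at h3 ⊢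
            rw [h3, hfab]
        · right
          rw [SimpleGraph.fromEdgeSet_adj] at h1
          have h3 : s(u, v') = g := Set.mem_singleton_iff.mp h1.1
          exact h3.trans hgx'y'
      have h1 : f ≤ g := hfmin g hgcut
      have h2 : g ≤ f := hgmin f hfC
      exact hfg (Set.mem_singleton_iff.mpr (le_antisymm h1 h2))
    · refine hTnbc (C \ {g}) ⟨C, g, ⟨v, w, hw, hCeq⟩, hgC, hgmin, rfl⟩ ?_
      intro z hz
      rcases (hT'mem z).mp (hBsub hz) with h | h
      · exact h.1
      · rw [Set.mem_singleton_iff] at h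
        exact absurd (h ▸ hz) hfB
  -- lexicographic comparison
  have hmemT : ∀ x : Sym2 V, x ∈ edgeList T ↔ x ∈ T.edgeSet := by
    intro x
    unfold edgeList
    rw [Finset.mem_sort, Set.Finite.mem_toFinset]
  have hmemT' : ∀ x : Sym2 V, x ∈ edgeList T' ↔ x ∈ T'.edgeSet := by
    intro x
    unfold edgeList
    rw [Finset.mem_sort, Set.Finite.mem_toFinset]
  have hlex : treeLexLT T' T := by
    unfold treeLexLT edgeList
    refine sorted_lex _ _ (Finset.sortedLT_sort _).pairwise (Finset.sortedLT_sort _).pairwise f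
      ?_ ?_ ?_ ?_ ?_
    · rw [Finset.mem_sort, Set.Finite.mem_toFinset]
      exact hfT'
    · rw [Finset.mem_sort, Set.Finite.mem_toFinset]
      exact hfT
    · intro x hx hxf
      rw [Finset.mem_sort, Set.Finite.mem_toFinset] at hx ⊢
      refine (hT'mem x).mpr (Or.inl ⟨hx, ?_⟩)
      simp only [Set.mem_singleton_iff]
      exact (hxf.trans hfe).ne
    · intro x hx hxf
      rw [Finset.mem_sort, Set.Finite.mem_toFinset] at hx ⊢
      rcases (hT'mem x).mp hx with h | h
      · exact h.1
      · rw [Set.mem_singleton_iff] at h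
        exact absurd (h ▸ hxf) (lt_irrefl f)
    · refine ⟨e, ?_, hfe⟩
      rw [Finset.mem_sort, Set.Finite.mem_toFinset]
      exact heT
  exact ⟨⟨⟨hT'G, hT'tree⟩, hT'nbc⟩, hlex⟩
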